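/- For every integer n ≥ 2, the map sending a permutation σ of Z_n to the set {σ∘h∘σ⁻¹ : h ∈ M_n} of σ-conjugates of M_n is injective: if σ_0 ≠ σ_1 are permutations of Z_n, then {σ_0∘h∘σ_0⁻¹ : h ∈ M_n} ≠ {σ_1∘h∘σ_1⁻¹ : h ∈ M_n}. -/

import Mathlib

/-
`σ M_n σ⁻¹` consists of the maps that are decreasing for the linear order pulled back along
`σ⁻¹`, and it determines that order: `σ⁻¹ a ≤ σ⁻¹ b` exactly when the map sending `b` to `a`
and fixing every other point lies in `σ M_n σ⁻¹`. Two permutations inducing the same order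
differ by an order automorphism of `Fin n`, which must be the identity.
-/

/-- The `σ`-conjugate `{σ∘h∘σ⁻¹ : h ∈ M_n}` of `M_n = {h | ∀ i, h i ≤ i}`. -/
def conjM (n : ℕ) (σ : Equiv.Perm (Fin n)) : Set (Fin n → Fin n) :=
  (fun h => ⇑σ ∘ h ∘ ⇑σ.symm) '' {h : Fin n → Fin n | ∀ i : Fin n, h i ≤ i}

theorem Equiv.eq_of_le_iff_le {α β : Type*} [LinearOrder α] [WellFoundedLT α] {e₁ e₂ : β ≃ α}
    (h : ∀ a b, e₁ a ≤ e₁ b ↔ e₂ a ≤ e₂ b) : e₁ = e₂ := by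
  let f : α ≃o α :=
    { toEquiv := e₂.symm.trans e₁
      map_rel_iff' := fun {x y} => by simpa using h (e₂.symm x) (e₂.symm y) }
  have hf : f = OrderIso.refl α := Subsingleton.elim _ _
  ext b
  simpa [f] using DFunLike.congr_fun hf (e₂ b)

theorem mem_conjM_iff {n : ℕ} {σ : Equiv.Perm (Fin n)} {g : Fin n → Fin n} :
    g ∈ conjM n σ ↔ ∀ j, σ.symm (g j) ≤ σ.symm j := by
  constructor
  · rintro ⟨h, hh, rfl⟩ j
    simpa using hh (σ.symm j)
  · intro hg
    exact ⟨σ.symm ∘ g ∘ σ, fun i => by simpa using hg (σ i), by ext j; simp⟩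

theorem update_id_mem_conjM_iff {n : ℕ} {σ : Equiv.Perm (Fin n)} {a b : Fin n} :
    Function.update id b a ∈ conjM n σ ↔ σ.symm a ≤ σ.symm b := by
  rw [mem_conjM_iff]
  refine ⟨fun h => by simpa using h b, fun hab j => ?_⟩
  rcases eq_or_ne j b with rfl | hj
  · simpa using hab
  · simp [hj]

theorem conjugates_of_M_distinct_general (n : ℕ) :
    Function.Injective (conjM n) := by
  intro σ τ h
  have hle : ∀ a b, σ.symm a ≤ σ.symm b ↔ τ.symm a ≤ τ.symm b := fun a b => by
    rw [← update_id_mem_conjM_iff, ← update_id_mem_conjM_iff, h]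
  simpa using congrArg Equiv.symm (Equiv.eq_of_le_iff_le hle)

/-- The distinctness claim in Proposition 3, part 1: the map `σ ↦ σ M_n σ⁻¹`
is injective on `S_n`. -/
theorem conjugates_of_M_distinct (n : ℕ) (hn : 2 ≤ n) :
    Function.Injective (conjM n) :=
  conjugates_of_M_distinct_general n
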